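/- Let (u,p) be a solution of the mixed Volterra problem and define G₂(t) := ‖f(t)‖_{𝒱'} + ‖a‖‖u(t)‖_𝒱 + C_{k₁}‖a‖‖u‖_{L¹(J;𝒱)}. Then for a.e. t ∈ J, ‖B*p(t)‖_{𝒱'} ≤ G₂(t) + C_{k₂}e^{TC_{k₂}} ∫₀ᵗ G₂(s) ds. -/

import Mathlib

open MeasureTheory Real Set
open scoped ENNReal

noncomputable section

variable {V Q : Type*}
  [NormedAddCommGroup V] [InnerProductSpace ℝ V] [CompleteSpace V]
  [NormedAddCommGroup Q] [InnerProductSpace ℝ Q] [CompleteSpace Q]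

/-- `(u, p)` is a solution of the mixed Volterra problem on `J = [0, T]`:
for a.e. `t ∈ J` and all `(v, q) ∈ 𝒱 × 𝒬`,
`a(u(t),v) + b(v,p(t)) = ⟨f(t),v⟩ + ∫₀ᵗ [k₁(t,s)a(u(s),v) + k₂(t,s)b(v,p(s))] ds` and
`b(u(t),q) = ⟨g(t),q⟩ + ∫₀ᵗ k₃(t,s)b(u(s),q) ds`. -/
def MixedVolterraSol (T : ℝ)
    (a : V →L[ℝ] V →L[ℝ] ℝ) (b : V →L[ℝ] Q →L[ℝ] ℝ)
    (k₁ k₂ k₃ : ℝ → ℝ → ℝ)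
    (f : ℝ → V →L[ℝ] ℝ) (g : ℝ → Q →L[ℝ] ℝ)
    (u : ℝ → V) (p : ℝ → Q) : Prop :=
  ∀ᵐ t ∂(volume.restrict (Icc (0:ℝ) T)),
    (∀ v : V, a (u t) v + b v (p t)
        = f t v + ∫ s in (0:ℝ)..t, (k₁ t s * a (u s) v + k₂ t s * b v (p s))) ∧
    ∀ q : Q, b (u t) q = g t q + ∫ s in (0:ℝ)..t, k₃ t s * b (u s) q

/-
Testing the first equation against `v` and bounding each term by the operator norms of `f(t)`
and `a` and by the kernel bounds gives `‖B*p(t)‖ ≤ G₂(t) + C_{k₂} ∫₀ᵗ ‖B*p(s)‖ ds` for a.e. `t`;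
Grönwall's inequality in integral form then turns this into the stated estimate.
-/

open Topology

section Gronwall

theorem le_mul_exp_of_le_add_mul_integral {Ψ : ℝ → ℝ} {C M t₀ : ℝ} (hC : 0 ≤ C)
    (ht₀ : 0 ≤ t₀) (hΨ : ContinuousOn Ψ (Icc 0 t₀))
    (h : ∀ x ∈ Icc 0 t₀, Ψ x ≤ M + C * ∫ s in (0:ℝ)..x, Ψ s) :
    Ψ t₀ ≤ M * exp (C * t₀) := by
  set F : ℝ → ℝ := fun x => ∫ s in (0:ℝ)..x, Ψ s
  have hF : ContinuousOn F (Icc 0 t₀) := by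
    have := intervalIntegral.continuousOn_primitive_interval (μ := volume) (a := 0) (b := t₀)
      (by rw [uIcc_of_le ht₀]; exact hΨ.integrableOn_Icc)
    rwa [uIcc_of_le ht₀] at this
  have hF' : ∀ x ∈ Ico 0 t₀, HasDerivWithinAt F (Ψ x) (Ici x) x := by
    intro x hx
    have hmem : Icc 0 t₀ ∈ 𝓝[>] x := nhdsWithin_mono x Ioi_subset_Ici_self
      (Filter.mem_of_superset (Icc_mem_nhdsGE hx.2) (Icc_subset_Icc_left hx.1))
    exact intervalIntegral.integral_hasDerivWithinAt_right
      ((hΨ.mono (Icc_subset_Icc_right hx.2.le)).intervalIntegrable_of_Icc hx.1)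
      ⟨Icc 0 t₀, hmem, hΨ.aestronglyMeasurable measurableSet_Icc⟩
      ((hΨ x (Ico_subset_Icc_self hx)).mono_of_mem_nhdsWithin hmem)
  have hFle : F t₀ ≤ gronwallBound 0 C M t₀ := by
    simpa only [sub_zero] using le_gronwallBound_of_liminf_deriv_right_le hF
      (fun x hx _ hr => (hF' x hx).liminf_right_slope_le hr) (by simp [F])
      (fun x hx => by linarith [h x (Ico_subset_Icc_self hx)]) t₀ ⟨ht₀, le_rfl⟩
  have hbound : M + C * gronwallBound 0 C M t₀ = M * exp (C * t₀) := by
    rcases eq_or_ne C 0 with rfl | hC0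
    · simp
    · rw [gronwallBound_of_K_ne_0 hC0]
      field_simp
      ring
  calc Ψ t₀ ≤ M + C * F t₀ := h t₀ ⟨ht₀, le_rfl⟩
    _ ≤ M + C * gronwallBound 0 C M t₀ := by gcongr
    _ = M * exp (C * t₀) := hbound

variable {φ G : ℝ → ℝ} {C T : ℝ}

theorem integral_le_exp_mul_integral_of_ae_le_add_mul_integral (hC : 0 ≤ C)
    (hφ : IntegrableOn φ (Icc 0 T)) (hG : IntegrableOn G (Icc 0 T))
    (hG0 : ∀ t ∈ Icc 0 T, 0 ≤ G t)
    (h : ∀ᵐ t ∂(volume.restrict (Icc (0:ℝ) T)), φ t ≤ G t + C * ∫ s in (0:ℝ)..t, φ s) :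
    ∀ t ∈ Icc (0:ℝ) T, ∫ s in (0:ℝ)..t, φ s ≤ exp (C * t) * ∫ s in (0:ℝ)..t, G s := by
  intro t ht
  have hint : ∀ {ψ : ℝ → ℝ}, IntegrableOn ψ (Icc 0 T) → ∀ x ∈ Icc 0 t,
      IntervalIntegrable ψ volume 0 x := fun hψ x hx =>
    (intervalIntegrable_iff_integrableOn_Icc_of_le hx.1).2
      (hψ.mono_set (Icc_subset_Icc_right (hx.2.trans ht.2)))
  have hΨ : ContinuousOn (fun x => ∫ s in (0:ℝ)..x, φ s) (Icc 0 t) := by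
    have := intervalIntegral.continuousOn_primitive_interval (μ := volume) (a := 0) (b := t)
      (by rw [uIcc_of_le ht.1]; exact hφ.mono_set (Icc_subset_Icc_right ht.2))
    rwa [uIcc_of_le ht.1] at this
  rw [mul_comm (exp _)]
  refine le_mul_exp_of_le_add_mul_integral hC ht.1 hΨ fun x hx => ?_
  have hGx : ∫ s in (0:ℝ)..x, G s ≤ ∫ s in (0:ℝ)..t, G s :=
    intervalIntegral.integral_mono_interval le_rfl hx.1 hx.2
      (ae_restrict_of_forall_mem measurableSet_Ioc fun s hs =>
        hG0 s ⟨hs.1.le, hs.2.trans ht.2⟩)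
      (hint hG t ⟨ht.1, le_rfl⟩)
  have hΨx : IntervalIntegrable (fun y => C * ∫ s in (0:ℝ)..y, φ s) volume 0 x :=
    ((hΨ.mono (Icc_subset_Icc_right hx.2)).intervalIntegrable_of_Icc hx.1).const_mul C
  calc ∫ s in (0:ℝ)..x, φ s
      ≤ ∫ y in (0:ℝ)..x, (G y + C * ∫ s in (0:ℝ)..y, φ s) :=
        intervalIntegral.integral_mono_ae_restrict hx.1 (hint hφ x hx) ((hint hG x hx).add hΨx)
          (ae_restrict_of_ae_restrict_of_subset (Icc_subset_Icc_right (hx.2.trans ht.2)) h)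
    _ = (∫ s in (0:ℝ)..x, G s) + C * ∫ y in (0:ℝ)..x, ∫ s in (0:ℝ)..y, φ s := by
        rw [intervalIntegral.integral_add (hint hG x hx) hΨx, intervalIntegral.integral_const_mul]
    _ ≤ (∫ s in (0:ℝ)..t, G s) + C * ∫ y in (0:ℝ)..x, ∫ s in (0:ℝ)..y, φ s := by gcongr

theorem ae_le_add_mul_exp_mul_integral_of_ae_le_add_mul_integral (hC : 0 ≤ C)
    (hφ : IntegrableOn φ (Icc 0 T)) (hG : IntegrableOn G (Icc 0 T))
    (hG0 : ∀ t ∈ Icc 0 T, 0 ≤ G t)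
    (h : ∀ᵐ t ∂(volume.restrict (Icc (0:ℝ) T)), φ t ≤ G t + C * ∫ s in (0:ℝ)..t, φ s) :
    ∀ᵐ t ∂(volume.restrict (Icc (0:ℝ) T)),
      φ t ≤ G t + C * exp (T * C) * ∫ s in (0:ℝ)..t, G s := by
  filter_upwards [h, ae_restrict_mem measurableSet_Icc] with t ht htJ
  have hG0t : 0 ≤ ∫ s in (0:ℝ)..t, G s :=
    intervalIntegral.integral_nonneg htJ.1 fun s hs => hG0 s ⟨hs.1, hs.2.trans htJ.2⟩
  have hexp : exp (C * t) ≤ exp (T * C) := exp_le_exp.2 (by nlinarith [htJ.2])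
  calc φ t ≤ G t + C * ∫ s in (0:ℝ)..t, φ s := ht
    _ ≤ G t + C * (exp (C * t) * ∫ s in (0:ℝ)..t, G s) := by
        gcongr
        exact integral_le_exp_mul_integral_of_ae_le_add_mul_integral hC hφ hG hG0 h t htJ
    _ ≤ G t + C * exp (T * C) * ∫ s in (0:ℝ)..t, G s := by
        rw [mul_assoc]
        gcongr

end Gronwall

theorem abs_integral_mul_add_mul_le {k₁ k₂ w₁ w₂ W₁ W₂ : ℝ → ℝ} {C₁ C₂ t : ℝ} (ht : 0 ≤ t)
    (hk₁ : ∀ s ∈ Ioc 0 t, |k₁ s| ≤ C₁) (hk₂ : ∀ s ∈ Ioc 0 t, |k₂ s| ≤ C₂)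
    (hw₁ : ∀ s ∈ Ioc 0 t, |w₁ s| ≤ W₁ s) (hw₂ : ∀ s ∈ Ioc 0 t, |w₂ s| ≤ W₂ s)
    (hW₁ : IntervalIntegrable W₁ volume 0 t) (hW₂ : IntervalIntegrable W₂ volume 0 t) :
    |∫ s in (0:ℝ)..t, (k₁ s * w₁ s + k₂ s * w₂ s)|
      ≤ C₁ * (∫ s in (0:ℝ)..t, W₁ s) + C₂ * ∫ s in (0:ℝ)..t, W₂ s := by
  have hbound : ∀ s ∈ Ioc 0 t, ‖k₁ s * w₁ s + k₂ s * w₂ s‖ ≤ C₁ * W₁ s + C₂ * W₂ s := by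
    intro s hs
    calc ‖k₁ s * w₁ s + k₂ s * w₂ s‖ ≤ |k₁ s| * |w₁ s| + |k₂ s| * |w₂ s| := by
          simpa only [Real.norm_eq_abs, abs_mul] using norm_add_le (k₁ s * w₁ s) (k₂ s * w₂ s)
      _ ≤ C₁ * W₁ s + C₂ * W₂ s := by
          gcongr
          exacts [(abs_nonneg _).trans (hk₁ s hs), hk₁ s hs, hw₁ s hs,
            (abs_nonneg _).trans (hk₂ s hs), hk₂ s hs, hw₂ s hs]
  have hCW₁ := hW₁.const_mul C₁
  have hCW₂ := hW₂.const_mul C₂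
  calc _ ≤ ∫ s in (0:ℝ)..t, (C₁ * W₁ s + C₂ * W₂ s) :=
        intervalIntegral.norm_integral_le_of_norm_le ht (ae_of_all _ hbound) (hCW₁.add hCW₂)
    _ = _ := by
        rw [intervalIntegral.integral_add hCW₁ hCW₂,
          intervalIntegral.integral_const_mul, intervalIntegral.integral_const_mul]

section Estimate

variable {E F : Type*} [NormedAddCommGroup E] [NormedSpace ℝ E]
  [NormedAddCommGroup F] [NormedSpace ℝ F]

theorem norm_flip_le_of_forall_eq_add_integral {a : E →L[ℝ] E →L[ℝ] ℝ}
    {b : E →L[ℝ] F →L[ℝ] ℝ} {k₁ k₂ : ℝ → ℝ} {C₁ C₂ t : ℝ} {f : E →L[ℝ] ℝ}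
    {u : ℝ → E} {p : ℝ → F} {u₀ : E} {p₀ : F} (ht : 0 ≤ t) (hC₁ : 0 ≤ C₁) (hC₂ : 0 ≤ C₂)
    (hk₁ : ∀ s ∈ Ioc 0 t, |k₁ s| ≤ C₁) (hk₂ : ∀ s ∈ Ioc 0 t, |k₂ s| ≤ C₂)
    (hu : IntervalIntegrable u volume 0 t) (hp : IntervalIntegrable p volume 0 t)
    (heq : ∀ v, a u₀ v + b v p₀ = f v + ∫ s in (0:ℝ)..t, (k₁ s * a (u s) v + k₂ s * b v (p s))) :
    ‖b.flip p₀‖ ≤ ‖f‖ + ‖a‖ * ‖u₀‖ + C₁ * ‖a‖ * (∫ s in (0:ℝ)..t, ‖u s‖)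
      + C₂ * ∫ s in (0:ℝ)..t, ‖b.flip (p s)‖ := by
  have hpint : IntervalIntegrable (fun s => ‖b.flip (p s)‖) volume 0 t :=
    IntervalIntegrable.norm ⟨b.flip.integrable_comp hp.1, b.flip.integrable_comp hp.2⟩
  have hu0 : 0 ≤ ∫ s in (0:ℝ)..t, ‖u s‖ :=
    intervalIntegral.integral_nonneg ht fun s _ => norm_nonneg _
  have hp0 : 0 ≤ ∫ s in (0:ℝ)..t, ‖b.flip (p s)‖ :=
    intervalIntegral.integral_nonneg ht fun s _ => norm_nonneg _
  refine ContinuousLinearMap.opNorm_le_bound _ (by positivity) fun v => ?_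
  have hkernel := abs_integral_mul_add_mul_le ht hk₁ hk₂
    (W₁ := fun s => ‖a‖ * ‖v‖ * ‖u s‖) (W₂ := fun s => ‖v‖ * ‖b.flip (p s)‖)
    (fun s _ => (a.le_opNorm₂ (u s) v).trans_eq (by ring))
    (fun s _ => ((b.flip (p s)).le_opNorm v).trans_eq (mul_comm _ _))
    (hu.norm.const_mul _) (hpint.const_mul _)
  simp only [intervalIntegral.integral_const_mul] at hkernel
  have hbv : b.flip p₀ v
      = f v + (∫ s in (0:ℝ)..t, (k₁ s * a (u s) v + k₂ s * b v (p s))) - a u₀ v := by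
    rw [b.flip_apply]
    linarith [heq v]
  rw [hbv]
  calc _ ≤ ‖f v‖ + |∫ s in (0:ℝ)..t, (k₁ s * a (u s) v + k₂ s * b v (p s))| + ‖a u₀ v‖ :=
        (norm_sub_le _ _).trans (by gcongr; exact norm_add_le _ _)
    _ ≤ ‖f‖ * ‖v‖ + (C₁ * (‖a‖ * ‖v‖ * ∫ s in (0:ℝ)..t, ‖u s‖)
          + C₂ * (‖v‖ * ∫ s in (0:ℝ)..t, ‖b.flip (p s)‖)) + ‖a‖ * ‖u₀‖ * ‖v‖ := by
        gcongr
        exacts [f.le_opNorm v, hkernel, a.le_opNorm₂ _ _]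
    _ = _ := by ring

end Estimate

theorem MixedVolterraSol.ae_norm_flip_le {E F : Type*} [NormedAddCommGroup E]
    [InnerProductSpace ℝ E] [NormedAddCommGroup F] [InnerProductSpace ℝ F] {T : ℝ}
    {a : E →L[ℝ] E →L[ℝ] ℝ} {b : E →L[ℝ] F →L[ℝ] ℝ} {k₁ k₂ k₃ : ℝ → ℝ → ℝ}
    {f : ℝ → E →L[ℝ] ℝ} {g : ℝ → F →L[ℝ] ℝ} {u : ℝ → E} {p : ℝ → F} {C₁ C₂ : ℝ}
    (hsol : MixedVolterraSol T a b k₁ k₂ k₃ f g u p) (hC₁ : 0 ≤ C₁) (hC₂ : 0 ≤ C₂)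
    (hk₁ : ∀ t s : ℝ, 0 ≤ s → s ≤ t → t ≤ T → |k₁ t s| ≤ C₁)
    (hk₂ : ∀ t s : ℝ, 0 ≤ s → s ≤ t → t ≤ T → |k₂ t s| ≤ C₂)
    (hu : IntegrableOn u (Icc 0 T)) (hp : IntegrableOn p (Icc 0 T)) :
    ∀ᵐ t ∂(volume.restrict (Icc (0:ℝ) T)),
      ‖b.flip (p t)‖ ≤ ‖f t‖ + ‖a‖ * ‖u t‖ + C₁ * ‖a‖ * (∫ s in Icc (0:ℝ) T, ‖u s‖)
        + C₂ * ∫ s in (0:ℝ)..t, ‖b.flip (p s)‖ := by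
  filter_upwards [hsol, ae_restrict_mem measurableSet_Icc] with t hsolt ht
  have hsub : Icc 0 t ⊆ Icc 0 T := Icc_subset_Icc_right ht.2
  refine (norm_flip_le_of_forall_eq_add_integral ht.1 hC₁ hC₂
    (fun s hs => hk₁ t s hs.1.le hs.2 ht.2) (fun s hs => hk₂ t s hs.1.le hs.2 ht.2)
    ((intervalIntegrable_iff_integrableOn_Icc_of_le ht.1).2 (hu.mono_set hsub))
    ((intervalIntegrable_iff_integrableOn_Icc_of_le ht.1).2 (hp.mono_set hsub)) hsolt.1).trans ?_
  have hu_le : ∫ s in (0:ℝ)..t, ‖u s‖ ≤ ∫ s in Icc (0:ℝ) T, ‖u s‖ := by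
    rw [intervalIntegral.integral_of_le ht.1]
    exact setIntegral_mono_set hu.norm (ae_of_all _ fun s => norm_nonneg _)
      (Ioc_subset_Icc_self.trans hsub).eventuallyLE
  gcongr

theorem mixed_volterra_Bstar_p_bound
    (T : ℝ)
    (a : V →L[ℝ] V →L[ℝ] ℝ) (b : V →L[ℝ] Q →L[ℝ] ℝ)
    (k₁ k₂ k₃ : ℝ → ℝ → ℝ)
    (Ck₁ Ck₂ : ℝ) (hCk₁ : 0 ≤ Ck₁) (hCk₂ : 0 ≤ Ck₂)
    (hk₁b : ∀ t s : ℝ, 0 ≤ s → s ≤ t → t ≤ T → |k₁ t s| ≤ Ck₁)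
    (hk₂b : ∀ t s : ℝ, 0 ≤ s → s ≤ t → t ≤ T → |k₂ t s| ≤ Ck₂)
    (f : ℝ → V →L[ℝ] ℝ) (g : ℝ → Q →L[ℝ] ℝ)
    (hf : IntegrableOn f (Icc 0 T))
    (u : ℝ → V) (p : ℝ → Q)
    (hu : IntegrableOn u (Icc 0 T)) (hp : IntegrableOn p (Icc 0 T))
    (hsol : MixedVolterraSol T a b k₁ k₂ k₃ f g u p)
    (G₂ : ℝ → ℝ)
    (hG₂ : ∀ t : ℝ, G₂ t = ‖f t‖ + ‖a‖ * ‖u t‖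
        + Ck₁ * ‖a‖ * ∫ s in Icc (0:ℝ) T, ‖u s‖) :
    ∀ᵐ t ∂(volume.restrict (Icc (0:ℝ) T)),
      ‖b.flip (p t)‖ ≤ G₂ t + Ck₂ * exp (T * Ck₂) * ∫ s in (0:ℝ)..t, G₂ s := by
  obtain rfl : G₂ = _ := funext hG₂
  have hG₂int : IntegrableOn (fun t => ‖f t‖ + ‖a‖ * ‖u t‖
      + Ck₁ * ‖a‖ * ∫ s in Icc (0:ℝ) T, ‖u s‖) (Icc 0 T) :=
    (hf.norm.add (hu.norm.const_mul _)).add (integrableOn_const measure_Icc_lt_top.ne)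
  exact ae_le_add_mul_exp_mul_integral_of_ae_le_add_mul_integral hCk₂
    (b.flip.integrable_comp hp).norm hG₂int (fun t _ => by positivity)
    (hsol.ae_norm_flip_le hCk₁ hCk₂ hk₁b hk₂b hu hp)
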